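/- Let J : X → X be a surjective linear isometry of a Banach space X, and let T be a bounded linear operator on X which commutes with J. Then T is a Riesz operator if and only if JT is a Riesz operator. -/

import Mathlib

/-!
Composing on the left with a surjective linear isometry `e` permutes the compact operators, and
`‖e ∘ A - C‖ = ‖A - e⁻¹ ∘ C‖`; so `e ∘ A` and `A` have the same distances to the compact
operators. Since `J` commutes with `T`, `(J ∘ T) ^ n = J ^ n ∘ T ^ n`,
and `J ^ n` is again a surjective isometry, so the sequences in the Ruston condition for `T` and
for `J ∘ T` coincide term by term.
-/

open MeasureTheory Filter Topology

/-- A bounded operator is a *Riesz operator* iff it satisfies the Ruston condition of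
asymptotic quasi-compactness. -/
def IsRieszOperator {X : Type*} [NormedAddCommGroup X] [NormedSpace ℂ X]
    (T : X →L[ℂ] X) : Prop :=
  Tendsto
    (fun n : ℕ =>
      (sInf {r : ℝ | ∃ C : X →L[ℂ] X, IsCompactOperator ⇑C ∧ r = ‖T ^ n - C‖}) ^ (1 / (n : ℝ)))
    atTop (𝓝 0)

theorem Isometry.iterate {α : Type*} [PseudoEMetricSpace α] {f : α → α} (hf : Isometry f) :
    ∀ n : ℕ, Isometry f^[n]
  | 0 => isometry_id
  | n + 1 => (hf.iterate n).comp hf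

namespace LinearIsometryEquiv

variable {𝕜 E F G : Type*} [NontriviallyNormedField 𝕜]
  [SeminormedAddCommGroup E] [SeminormedAddCommGroup F] [SeminormedAddCommGroup G]
  [NormedSpace 𝕜 E] [NormedSpace 𝕜 F] [NormedSpace 𝕜 G]

theorem setOf_norm_comp_sub_compact (e : E ≃ₗᵢ[𝕜] F) (A : G →L[𝕜] E) :
    {r : ℝ | ∃ C : G →L[𝕜] F, IsCompactOperator ⇑C ∧ r = ‖(e : E →L[𝕜] F) ∘L A - C‖} =
      {r : ℝ | ∃ C : G →L[𝕜] E, IsCompactOperator ⇑C ∧ r = ‖A - C‖} := by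
  have norm_comp (B : G →L[𝕜] E) : ‖(e : E →L[𝕜] F) ∘L B‖ = ‖B‖ :=
    e.toLinearIsometry.norm_toContinuousLinearMap_comp
  ext r
  constructor
  · rintro ⟨C, hC, rfl⟩
    refine ⟨(e.symm : F →L[𝕜] E) ∘L C, hC.clm_comp (e.symm : F →L[𝕜] E), ?_⟩
    have factor : (e : E →L[𝕜] F) ∘L A - C =
        (e : E →L[𝕜] F) ∘L (A - (e.symm : F →L[𝕜] E) ∘L C) := by
      ext
      simp
    rw [factor, norm_comp]
  · rintro ⟨C, hC, rfl⟩
    refine ⟨(e : E →L[𝕜] F) ∘L C, hC.clm_comp (e : E →L[𝕜] F), ?_⟩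
    rw [← ContinuousLinearMap.comp_sub, norm_comp]

end LinearIsometryEquiv

theorem riesz_iff_isometry_comp_general
    {X : Type*} [NormedAddCommGroup X] [NormedSpace ℂ X]
    (J : X →L[ℂ] X) (hJiso : Isometry J) (hJsurj : Function.Surjective J)
    (T : X →L[ℂ] X) (hcomm : J ∘L T = T ∘L J) :
    IsRieszOperator T ↔ IsRieszOperator (J ∘L T) := by
  have compact_distances_eq (n : ℕ) :
      {r : ℝ | ∃ C : X →L[ℂ] X, IsCompactOperator ⇑C ∧ r = ‖(J ∘L T) ^ n - C‖} =
        {r : ℝ | ∃ C : X →L[ℂ] X, IsCompactOperator ⇑C ∧ r = ‖T ^ n - C‖} := by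
    have hiso : Isometry ⇑(J ^ n) := by
      rw [FunLike.coe_pow_eq_iterate]; exact hJiso.iterate n
    have hsurj : Function.Surjective ⇑(J ^ n) := by
      rw [FunLike.coe_pow_eq_iterate]; exact hJsurj.iterate n
    let e : X ≃ₗᵢ[ℂ] X := .ofSurjective
      ⟨(J ^ n : X →L[ℂ] X), (AddMonoidHomClass.isometry_iff_norm _).1 hiso⟩ hsurj
    have hpow : (J ∘L T) ^ n = J ^ n * T ^ n := (show Commute J T from hcomm).mul_pow n
    rw [hpow]
    exact e.setOf_norm_comp_sub_compact (T ^ n)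
  simp only [IsRieszOperator, compact_distances_eq]

/-- If `J` is a surjective linear isometry of a Banach space `X` and `T` is a bounded operator
commuting with `J`, then `T` is a Riesz operator iff `J ∘ T` is a Riesz operator. -/
theorem riesz_iff_isometry_comp
    {X : Type*} [NormedAddCommGroup X] [NormedSpace ℂ X] [CompleteSpace X]
    (J : X →L[ℂ] X) (hJiso : Isometry J) (hJsurj : Function.Surjective J)
    (T : X →L[ℂ] X) (hcomm : J ∘L T = T ∘L J) :
    IsRieszOperator T ↔ IsRieszOperator (J ∘L T) :=
  riesz_iff_isometry_comp_general J hJiso hJsurj T hcomm
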